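/- Let g ∈ ℝ and let F̃̃ : (0,∞) → ℝ be any differentiable function. On the domain {(T₁,T₃,T₅) : T₅ < 0, χ₁²/2 − χ₂ > 0}, where χ₁ = (1/5)·(−2T₃)·(−2T₅)^{−3/5} and χ₂ = (1/15)·(−2T₁)·(−2T₅)^{−1/5}, define η₂ = χ₁²/2 − χ₂ and F(T₁,T₃,T₅) = −(g²/40)·log(−T₅) − 225·( (1/60)χ₁⁵ − (1/12)χ₁³χ₂ + (1/8)χ₁χ₂² ) + F̃̃(η₂). Then F satisfies both reduced Virasoro constraints of the N = 2 Kontsevich model: 3T₃·∂F/∂T₁ + 5T₅·∂F/∂T₃ + T₁²/2 = 0 and T₁·∂F/∂T₁ + 3T₃·∂F/∂T₃ + 5T₅·∂F/∂T₅ + g²/8 = 0. -/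

import Mathlib

/-!
`χ₁` and `χ₂` are homogeneous of degree 0 under the scaling field `L₀ = T₁∂₁ + 3T₃∂₃ + 5T₅∂₅`, so
`L₀` annihilates them, while `L₋₁ = 3T₃∂₁ + 5T₅∂₃` acts by `L₋₁χ₁ = w`, `L₋₁χ₂ = χ₁ w` with
`w = (-2T₅)^(2/5)`. Hence `η₂ = χ₁²/2 - χ₂` is annihilated by both fields and the arbitrary term
`F̃̃(η₂)` drops out. Of the rest, `L₀` only sees the logarithm, giving `-g²/8`, and `L₋₁` only sees
the polynomial in `χ₁, χ₂`, giving `-(225/8) χ₂² w = -T₁²/2`.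
-/

open Real

/-- The scaling variable `χ₁ = (1/5)·(−2T₃)·(−2T₅)^{−3/5}` of the `N = 2`
Kontsevich model. -/
noncomputable def chiOne (T₃ T₅ : ℝ) : ℝ :=
  (1 / 5) * (-2 * T₃) * (-2 * T₅) ^ (-(3 : ℝ) / 5)

/-- The scaling variable `χ₂ = (1/15)·(−2T₁)·(−2T₅)^{−1/5}` of the `N = 2`
Kontsevich model. -/
noncomputable def chiTwo (T₁ T₅ : ℝ) : ℝ :=
  (1 / 15) * (-2 * T₁) * (-2 * T₅) ^ (-(1 : ℝ) / 5)

/-- The variable `η₂ = χ₁²/2 − χ₂`. -/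
noncomputable def etaTwo (T₁ T₃ T₅ : ℝ) : ℝ :=
  (chiOne T₃ T₅) ^ 2 / 2 - chiTwo T₁ T₅

/-- The general solution of the reduced Virasoro constraints of the `N = 2`
Kontsevich model, with `F̃̃` an arbitrary function of one variable. -/
noncomputable def kontsevichN2F (g : ℝ) (Ftt : ℝ → ℝ) (T₁ T₃ T₅ : ℝ) : ℝ :=
  -(g ^ 2 / 40) * Real.log (-T₅) -
    225 * ((1 / 60) * (chiOne T₃ T₅) ^ 5 -
      (1 / 12) * (chiOne T₃ T₅) ^ 3 * chiTwo T₁ T₅ +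
      (1 / 8) * chiOne T₃ T₅ * (chiTwo T₁ T₅) ^ 2) +
    Ftt (etaTwo T₁ T₃ T₅)

lemma hasDerivAt_mul_rpow_const {a x : ℝ} (p : ℝ) (h : a * x ≠ 0) :
    HasDerivAt (fun t => (a * t) ^ p) (p * (a * x) ^ p / x) x := by
  have ha : a ≠ 0 := left_ne_zero_of_mul h
  have := (Real.hasDerivAt_rpow_const (p := p) (Or.inl h)).comp x
    ((hasDerivAt_id x).const_mul a)
  rw [Real.rpow_sub_one h] at this
  refine this.congr_deriv ?_
  field_simp

lemma rpow_neg_three_fifths_eq_pow {s : ℝ} (hs : 0 < s) :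
    s ^ (-(3 : ℝ) / 5) = (s ^ (-(1 : ℝ) / 5)) ^ 3 := by
  rw [← Real.rpow_natCast, ← Real.rpow_mul hs.le]
  norm_num

lemma rpow_neg_one_fifth_pow_five_mul {s : ℝ} (hs : 0 < s) :
    (s ^ (-(1 : ℝ) / 5)) ^ 5 * s = 1 := by
  rw [← Real.rpow_natCast, ← Real.rpow_mul hs.le]
  norm_num [Real.rpow_neg_one, hs.ne']

lemma hasDerivAt_chiOne_T₃ (T₃ T₅ : ℝ) :
    HasDerivAt (fun t => chiOne t T₅) (-(2 / 5) * (-2 * T₅) ^ (-(3 : ℝ) / 5)) T₃ :=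
  ((((hasDerivAt_id T₃).const_mul (-2)).const_mul (1 / 5)).mul_const
    ((-2 * T₅) ^ (-(3 : ℝ) / 5))).congr_deriv (by ring)

lemma hasDerivAt_chiTwo_T₁ (T₁ T₅ : ℝ) :
    HasDerivAt (fun t => chiTwo t T₅) (-(2 / 15) * (-2 * T₅) ^ (-(1 : ℝ) / 5)) T₁ :=
  ((((hasDerivAt_id T₁).const_mul (-2)).const_mul (1 / 15)).mul_const
    ((-2 * T₅) ^ (-(1 : ℝ) / 5))).congr_deriv (by ring)

lemma hasDerivAt_chiOne_T₅ (T₃ : ℝ) {T₅ : ℝ} (hT₅ : T₅ ≠ 0) :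
    HasDerivAt (fun t => chiOne T₃ t) (-(3 / 5) * chiOne T₃ T₅ / T₅) T₅ := by
  refine ((hasDerivAt_mul_rpow_const _ (by simpa using hT₅)).const_mul
    ((1 / 5) * (-2 * T₃))).congr_deriv ?_
  unfold chiOne
  ring

lemma hasDerivAt_chiTwo_T₅ (T₁ : ℝ) {T₅ : ℝ} (hT₅ : T₅ ≠ 0) :
    HasDerivAt (fun t => chiTwo T₁ t) (-(1 / 5) * chiTwo T₁ T₅ / T₅) T₅ := by
  refine ((hasDerivAt_mul_rpow_const _ (by simpa using hT₅)).const_mul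
    ((1 / 15) * (-2 * T₁))).congr_deriv ?_
  unfold chiTwo
  ring

noncomputable def kontsevichPotential (χ₁ χ₂ : ℝ) : ℝ :=
  225 * ((1 / 60) * χ₁ ^ 5 - (1 / 12) * χ₁ ^ 3 * χ₂ + (1 / 8) * χ₁ * χ₂ ^ 2)

/-- Since `∂₁K + a ∂₂K = 225 b² / 8` for `K = kontsevichPotential a b`, the derivative involves
`b'` only through the derivative `a a' - b'` of `a² / 2 - b`. -/
lemma hasDerivAt_kontsevichAnsatz {ℓ a b H : ℝ → ℝ} {ℓ' a' b' x : ℝ} (hℓ : HasDerivAt ℓ ℓ' x)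
    (ha : HasDerivAt a a' x) (hb : HasDerivAt b b' x)
    (hH : DifferentiableAt ℝ H (a x ^ 2 / 2 - b x)) :
    HasDerivAt (fun t => ℓ t - kontsevichPotential (a t) (b t) + H (a t ^ 2 / 2 - b t))
      (ℓ' - 225 / 8 * b x ^ 2 * a' +
        (deriv H (a x ^ 2 / 2 - b x) + 225 * (a x * b x / 4 - a x ^ 3 / 12)) *
          (a x * a' - b')) x := by
  have hK : HasDerivAt (fun t => kontsevichPotential (a t) (b t))
      (225 * ((1 / 12) * a x ^ 4 * a' - (1 / 12) * (3 * a x ^ 2 * a' * b x + a x ^ 3 * b') +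
        (1 / 8) * (a' * b x ^ 2 + a x * (2 * b x * b')))) x := by
    refine (((((ha.pow 5).const_mul (1 / 60)).sub
      (((ha.pow 3).const_mul (1 / 12)).mul hb)).add
      ((ha.const_mul (1 / 8)).mul (hb.pow 2))).const_mul 225).congr_deriv ?_
    simp only [Pi.pow_apply]
    ring
  have hη : HasDerivAt (fun t => a t ^ 2 / 2 - b t) (a x * a' - b') x :=
    (((ha.pow 2).div_const 2).sub hb).congr_deriv (by push_cast; ring)
  refine ((hℓ.sub hK).add (hH.hasDerivAt.comp x hη)).congr_deriv ?_
  ring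

noncomputable def vectorFieldDeriv (v₁ v₃ v₅ : ℝ) (f : ℝ → ℝ → ℝ → ℝ) (T₁ T₃ T₅ : ℝ) : ℝ :=
  v₁ * deriv (fun t => f t T₃ T₅) T₁ + v₃ * deriv (fun t => f T₁ t T₅) T₃ +
    v₅ * deriv (fun t => f T₁ T₃ t) T₅

section VirasoroAction

variable {T₁ T₃ T₅ : ℝ}

lemma vectorFieldDeriv_chiOne_lZero (hT₅ : T₅ ≠ 0) :
    vectorFieldDeriv T₁ (3 * T₃) (5 * T₅) (fun _ T₃ T₅ => chiOne T₃ T₅) T₁ T₃ T₅ = 0 := by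
  simp only [vectorFieldDeriv, deriv_const, (hasDerivAt_chiOne_T₃ T₃ T₅).deriv,
    (hasDerivAt_chiOne_T₅ T₃ hT₅).deriv]
  unfold chiOne
  field_simp
  ring

lemma vectorFieldDeriv_chiTwo_lZero (hT₅ : T₅ ≠ 0) :
    vectorFieldDeriv T₁ (3 * T₃) (5 * T₅) (fun T₁ _ T₅ => chiTwo T₁ T₅) T₁ T₃ T₅ = 0 := by
  simp only [vectorFieldDeriv, deriv_const, (hasDerivAt_chiTwo_T₁ T₁ T₅).deriv,
    (hasDerivAt_chiTwo_T₅ T₁ hT₅).deriv]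
  unfold chiTwo
  field_simp
  ring

lemma vectorFieldDeriv_chiTwo_lMinusOne (hT₅ : T₅ < 0) :
    vectorFieldDeriv (3 * T₃) (5 * T₅) 0 (fun T₁ _ T₅ => chiTwo T₁ T₅) T₁ T₃ T₅ =
      chiOne T₃ T₅ * vectorFieldDeriv (3 * T₃) (5 * T₅) 0 (fun _ T₃ T₅ => chiOne T₃ T₅) T₁ T₃ T₅ := by
  have hs : 0 < -2 * T₅ := by linarith
  simp only [vectorFieldDeriv, deriv_const, (hasDerivAt_chiTwo_T₁ T₁ T₅).deriv,
    (hasDerivAt_chiOne_T₃ T₃ T₅).deriv]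
  unfold chiOne
  rw [rpow_neg_three_fifths_eq_pow hs]
  linear_combination (2 / 5 * T₃ * (-2 * T₅) ^ (-(1 : ℝ) / 5)) *
    rpow_neg_one_fifth_pow_five_mul hs

lemma sq_div_two_eq_chiTwo_sq_mul_lMinusOne (hT₅ : T₅ < 0) :
    T₁ ^ 2 / 2 = 225 / 8 * chiTwo T₁ T₅ ^ 2 *
      vectorFieldDeriv (3 * T₃) (5 * T₅) 0 (fun _ T₃ T₅ => chiOne T₃ T₅) T₁ T₃ T₅ := by
  have hs : 0 < -2 * T₅ := by linarith
  simp only [vectorFieldDeriv, deriv_const, (hasDerivAt_chiOne_T₃ T₃ T₅).deriv]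
  unfold chiTwo
  rw [rpow_neg_three_fifths_eq_pow hs]
  linear_combination (-(T₁ ^ 2 / 2)) * rpow_neg_one_fifth_pow_five_mul hs

lemma vectorFieldDeriv_kontsevichN2F (g : ℝ) {Ftt : ℝ → ℝ}
    (hFtt : DifferentiableAt ℝ Ftt (etaTwo T₁ T₃ T₅)) (hT₅ : T₅ ≠ 0) (v₁ v₃ v₅ : ℝ) :
    vectorFieldDeriv v₁ v₃ v₅ (kontsevichN2F g Ftt) T₁ T₃ T₅ =
      v₅ * (-(g ^ 2 / 40) / T₅) -
        225 / 8 * chiTwo T₁ T₅ ^ 2 *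
          vectorFieldDeriv v₁ v₃ v₅ (fun _ T₃ T₅ => chiOne T₃ T₅) T₁ T₃ T₅ +
        (deriv Ftt (etaTwo T₁ T₃ T₅) +
            225 * (chiOne T₃ T₅ * chiTwo T₁ T₅ / 4 - chiOne T₃ T₅ ^ 3 / 12)) *
          (chiOne T₃ T₅ * vectorFieldDeriv v₁ v₃ v₅ (fun _ T₃ T₅ => chiOne T₃ T₅) T₁ T₃ T₅ -
            vectorFieldDeriv v₁ v₃ v₅ (fun T₁ _ T₅ => chiTwo T₁ T₅) T₁ T₃ T₅) := by
  have hlog : HasDerivAt (fun t => -(g ^ 2 / 40) * Real.log (-t)) (-(g ^ 2 / 40) / T₅) T₅ :=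
    (((Real.hasDerivAt_log (neg_ne_zero.2 hT₅)).comp T₅ (hasDerivAt_neg T₅)).const_mul
      _).congr_deriv (by field_simp)
  have h₁ : HasDerivAt (fun t => kontsevichN2F g Ftt t T₃ T₅) _ T₁ :=
    hasDerivAt_kontsevichAnsatz (hasDerivAt_const _ _) (hasDerivAt_const _ _)
      (hasDerivAt_chiTwo_T₁ T₁ T₅) hFtt
  have h₃ : HasDerivAt (fun t => kontsevichN2F g Ftt T₁ t T₅) _ T₃ :=
    hasDerivAt_kontsevichAnsatz (hasDerivAt_const _ _) (hasDerivAt_chiOne_T₃ T₃ T₅)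
      (hasDerivAt_const _ _) hFtt
  have h₅ : HasDerivAt (fun t => kontsevichN2F g Ftt T₁ T₃ t) _ T₅ :=
    hasDerivAt_kontsevichAnsatz hlog (hasDerivAt_chiOne_T₅ T₃ hT₅)
      (hasDerivAt_chiTwo_T₅ T₁ hT₅) hFtt
  simp only [vectorFieldDeriv, etaTwo, h₁.deriv, h₃.deriv, h₅.deriv, deriv_const,
    (hasDerivAt_chiOne_T₃ T₃ T₅).deriv, (hasDerivAt_chiOne_T₅ T₃ hT₅).deriv,
    (hasDerivAt_chiTwo_T₁ T₁ T₅).deriv, (hasDerivAt_chiTwo_T₅ T₁ hT₅).deriv]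
  ring

end VirasoroAction

/-- For any differentiable `F̃̃ : (0,∞) → ℝ`, the function `kontsevichN2F`
satisfies both reduced Virasoro constraints of the `N = 2` Kontsevich model on
the domain `T₅ < 0`, `η₂ > 0`. -/
theorem kontsevichN2F_satisfies_reduced_virasoro
    (g : ℝ) (Ftt : ℝ → ℝ) (hFtt : DifferentiableOn ℝ Ftt (Set.Ioi 0))
    (T₁ T₃ T₅ : ℝ) (hT₅ : T₅ < 0) (hdom : 0 < etaTwo T₁ T₃ T₅) :
    3 * T₃ * deriv (fun t => kontsevichN2F g Ftt t T₃ T₅) T₁ +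
        5 * T₅ * deriv (fun t => kontsevichN2F g Ftt T₁ t T₅) T₃ + T₁ ^ 2 / 2 = 0 ∧
    T₁ * deriv (fun t => kontsevichN2F g Ftt t T₃ T₅) T₁ +
        3 * T₃ * deriv (fun t => kontsevichN2F g Ftt T₁ t T₅) T₃ +
        5 * T₅ * deriv (fun t => kontsevichN2F g Ftt T₁ T₃ t) T₅ + g ^ 2 / 8 = 0 := by
  have hH : DifferentiableAt ℝ Ftt (etaTwo T₁ T₃ T₅) :=
    hFtt.differentiableAt (isOpen_Ioi.mem_nhds hdom)
  have hLMinusOne := vectorFieldDeriv_kontsevichN2F g hH hT₅.ne (3 * T₃) (5 * T₅) 0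
  rw [vectorFieldDeriv_chiTwo_lMinusOne hT₅,
    ← sq_div_two_eq_chiTwo_sq_mul_lMinusOne hT₅] at hLMinusOne
  have hLZero := vectorFieldDeriv_kontsevichN2F g hH hT₅.ne T₁ (3 * T₃) (5 * T₅)
  rw [vectorFieldDeriv_chiOne_lZero hT₅.ne, vectorFieldDeriv_chiTwo_lZero hT₅.ne] at hLZero
  unfold vectorFieldDeriv at hLMinusOne hLZero
  constructor
  · linear_combination hLMinusOne
  · linear_combination hLZero - g ^ 2 / 8 * mul_inv_cancel₀ hT₅.ne
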